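/- arXiv:2002.11852 — 3 statements merged into one kernel-verified Lean document; each statement's English description precedes it below -/
import Mathlib

section
/- Let ε > 0 and let u₀ : ℝ → ℝ be measurable and bounded, set W(y) := ∫₀^y u₀(z) dz, and define φ(x,t) := ∫_ℝ exp( −(x−y)²/(4εt) − W(y)/(2ε) ) dy for x ∈ ℝ, t > 0. Then for every x ∈ ℝ and t > 0, φ is differentiable with respect to x at (x,t) and ∂φ/∂x (x,t) = −(1/(2εt)) ∫_ℝ (x−y) · exp( −(x−y)²/(4εt) − W(y)/(2ε) ) dy. Consequently the Hopf quotient u(x,t) := [∫_ℝ (x−y) exp( −(x−y)²/(4εt) − W(y)/(2ε) ) dy] / [ t ∫_ℝ exp( −(x−y)²/(4εt) − W(y)/(2ε) ) dy ] equals −2ε (∂φ/∂x)(x,t)/φ(x,t). -/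
open MeasureTheory Real Metric

/-!
The Cole–Hopf integrand is the Gaussian `exp (-(x - y)² / (4εt))` times the weight
`exp (-W y / (2ε))`, and `|W y| ≤ M |y|`, so the weight grows at most like `exp (M |y| / (2ε))`.
By `c |z| ≤ a z² / 2 + c² / (2a)` a Gaussian absorbs such exponential growth together with the
linear factor `x - y` produced by differentiation, uniformly when the centre `x` moves by at
most `1`; this gives an integrable dominating function, so one may differentiate under the
integral sign. The Hopf quotient identity is then algebra.
-/

lemma exp_neg_mul_sq_add_mul_abs_le {a : ℝ} (ha : 0 < a) (c z : ℝ) :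
    exp (-a * z ^ 2 + c * |z|) ≤ exp (c ^ 2 / (2 * a)) * exp (-(a / 2) * z ^ 2) := by
  rw [← exp_add, exp_le_exp, div_add' _ _ _ (by positivity), le_div_iff₀ (by positivity),
    ← sq_abs z]
  nlinarith [sq_nonneg (a * |z| - c)]

lemma exp_neg_mul_sq_le_of_abs_sub_le_one {a z u : ℝ} (ha : 0 ≤ a) (h : |z - u| ≤ 1) :
    exp (-a * z ^ 2) ≤ exp a * exp (-(a / 2) * u ^ 2) := by
  rw [← exp_add, exp_le_exp]
  have : (z - u) ^ 2 ≤ 1 := by nlinarith [abs_nonneg (z - u), sq_abs (z - u)]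
  nlinarith [sq_nonneg (z + (z - u))]

lemma one_add_abs_mul_exp_le {a c z u : ℝ} (ha : 0 < a) (h : |z - u| ≤ 1) :
    (1 + |z|) * exp (-a * z ^ 2 + c * |z|) ≤
      exp ((c + 1) ^ 2 / (2 * a) + a / 2) * exp (-(a / 4) * u ^ 2) :=
  calc (1 + |z|) * exp (-a * z ^ 2 + c * |z|)
      ≤ exp |z| * exp (-a * z ^ 2 + c * |z|) := by
        gcongr; linarith [add_one_le_exp |z|]
    _ = exp (-a * z ^ 2 + (c + 1) * |z|) := by rw [← exp_add]; ring_nf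
    _ ≤ exp ((c + 1) ^ 2 / (2 * a)) * exp (-(a / 2) * z ^ 2) :=
        exp_neg_mul_sq_add_mul_abs_le ha _ _
    _ ≤ exp ((c + 1) ^ 2 / (2 * a)) * (exp (a / 2) * exp (-(a / 2 / 2) * u ^ 2)) := by
        gcongr; exact exp_neg_mul_sq_le_of_abs_sub_le_one (by positivity) h
    _ = exp ((c + 1) ^ 2 / (2 * a) + a / 2) * exp (-(a / 4) * u ^ 2) := by
        rw [exp_add]; ring_nf

section GaussianSmoothing

variable {E : Type*} [NormedAddCommGroup E] {a b C : ℝ} {g : ℝ → E}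

lemma one_add_abs_mul_exp_mul_norm_le (ha : 0 < a) (hg : ∀ y, ‖g y‖ ≤ C * exp (b * |y|))
    {x x' : ℝ} (hx' : |x' - x| ≤ 1) (y : ℝ) :
    (1 + |x' - y|) * exp (-a * (x' - y) ^ 2) * ‖g y‖ ≤
      C * exp (|b| * (|x| + 1)) * exp ((|b| + 1) ^ 2 / (2 * a) + a / 2) *
        exp (-(a / 4) * (x - y) ^ 2) := by
  have hC : 0 ≤ C := by simpa using (norm_nonneg _).trans (hg 0)
  have hy : |y| ≤ |x| + 1 + |x' - y| := by
    have := abs_sub_abs_le_abs_sub x' x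
    have := abs_sub_abs_le_abs_sub y x'
    linarith [abs_sub_comm y x']
  have hgy : ‖g y‖ ≤ C * exp (|b| * (|x| + 1)) * exp (|b| * |x' - y|) := by
    rw [mul_assoc, ← exp_add]
    refine (hg y).trans (mul_le_mul_of_nonneg_left (exp_le_exp.2 ?_) hC)
    nlinarith [le_abs_self b, abs_nonneg b, abs_nonneg y]
  calc (1 + |x' - y|) * exp (-a * (x' - y) ^ 2) * ‖g y‖
      ≤ (1 + |x' - y|) * exp (-a * (x' - y) ^ 2) *
          (C * exp (|b| * (|x| + 1)) * exp (|b| * |x' - y|)) := by gcongr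
    _ = C * exp (|b| * (|x| + 1)) *
          ((1 + |x' - y|) * exp (-a * (x' - y) ^ 2 + |b| * |x' - y|)) := by
        rw [exp_add]; ring
    _ ≤ C * exp (|b| * (|x| + 1)) *
          (exp ((|b| + 1) ^ 2 / (2 * a) + a / 2) * exp (-(a / 4) * (x - y) ^ 2)) := by
        refine mul_le_mul_of_nonneg_left (one_add_abs_mul_exp_le ha ?_) (by positivity)
        rwa [sub_sub_sub_cancel_right]
    _ = C * exp (|b| * (|x| + 1)) * exp ((|b| + 1) ^ 2 / (2 * a) + a / 2) *
          exp (-(a / 4) * (x - y) ^ 2) := by ring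

theorem hasDerivAt_integral_exp_neg_mul_sq_sub_smul [NormedSpace ℝ E] (ha : 0 < a)
    (hg_meas : AEStronglyMeasurable g) (hg : ∀ y, ‖g y‖ ≤ C * exp (b * |y|)) (x : ℝ) :
    HasDerivAt (fun x => ∫ y, exp (-a * (x - y) ^ 2) • g y)
      (∫ y, (-2 * a * (x - y) * exp (-a * (x - y) ^ 2)) • g y) x := by
  set K := C * exp (|b| * (|x| + 1)) * exp ((|b| + 1) ^ 2 / (2 * a) + a / 2)
  have hdom : ∀ y, ∀ x' ∈ ball x 1,
      (1 + |x' - y|) * exp (-a * (x' - y) ^ 2) * ‖g y‖ ≤ K * exp (-(a / 4) * (x - y) ^ 2) :=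
    fun y x' hx' => one_add_abs_mul_exp_mul_norm_le ha hg (mem_ball_iff_norm.1 hx').le y
  have hK_int : Integrable fun y => K * exp (-(a / 4) * (x - y) ^ 2) :=
    ((integrable_exp_neg_mul_sq (by positivity)).comp_sub_left x).const_mul K
  have h_meas : ∀ x' : ℝ, AEStronglyMeasurable fun y => exp (-a * (x' - y) ^ 2) • g y :=
    fun x' => (by fun_prop : Continuous fun y => exp (-a * (x' - y) ^ 2)).aestronglyMeasurable.smul
      hg_meas
  have h_int : Integrable fun y => exp (-a * (x - y) ^ 2) • g y := by
    refine hK_int.mono' (h_meas x) (ae_of_all _ fun y => ?_)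
    refine le_trans ?_ (hdom y x (mem_ball_self one_pos))
    rw [norm_smul, norm_of_nonneg (exp_pos _).le]
    gcongr
    exact le_mul_of_one_le_left (exp_pos _).le (by linarith [abs_nonneg (x - y)])
  have h_bound : ∀ y, ∀ x' ∈ ball x 1,
      ‖(-2 * a * (x' - y) * exp (-a * (x' - y) ^ 2)) • g y‖ ≤
        2 * a * (K * exp (-(a / 4) * (x - y) ^ 2)) := by
    intro y x' hx'
    calc ‖(-2 * a * (x' - y) * exp (-a * (x' - y) ^ 2)) • g y‖
        = 2 * a * (|x' - y| * exp (-a * (x' - y) ^ 2) * ‖g y‖) := by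
          rw [norm_smul, Real.norm_eq_abs, abs_mul, abs_mul, abs_mul, abs_neg, abs_two,
            abs_of_pos ha, abs_of_pos (exp_pos _)]
          ring
      _ ≤ 2 * a * ((1 + |x' - y|) * exp (-a * (x' - y) ^ 2) * ‖g y‖) := by gcongr; linarith
      _ ≤ 2 * a * (K * exp (-(a / 4) * (x - y) ^ 2)) :=
          mul_le_mul_of_nonneg_left (hdom y x' hx') (by positivity)
  have h_diff : ∀ y, ∀ x' ∈ ball x 1, HasDerivAt (fun x => exp (-a * (x - y) ^ 2) • g y)
      ((-2 * a * (x' - y) * exp (-a * (x' - y) ^ 2)) • g y) x' := by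
    intro y x' _
    have h : HasDerivAt (fun x => exp (-a * (x - y) ^ 2))
        (-2 * a * (x' - y) * exp (-a * (x' - y) ^ 2)) x' := by
      convert ((((hasDerivAt_id' x').sub_const y).fun_pow 2).const_mul (-a)).exp using 1
      simp only [Nat.cast_ofNat]
      ring
    exact h.smul_const (g y)
  exact (hasDerivAt_integral_of_dominated_loc_of_deriv_le (ball_mem_nhds x one_pos)
    (.of_forall h_meas) h_int (by fun_prop) (ae_of_all _ h_bound) (hK_int.const_mul _)
    (ae_of_all _ h_diff)).2

end GaussianSmoothing

lemma continuous_primitive_of_norm_le {E : Type*} [NormedAddCommGroup E] [NormedSpace ℝ E]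
    {f : ℝ → E} {M : ℝ} (hf : AEStronglyMeasurable f) (hM : ∀ z, ‖f z‖ ≤ M) (a : ℝ) :
    Continuous fun b => ∫ z in a..b, f z :=
  intervalIntegral.continuous_primitive (fun _ _ => (intervalIntegrable_iff).2 <|
    Measure.integrableOn_of_bounded measure_Ioc_lt_top.ne hf (ae_of_all _ hM)) a

theorem hasDerivAt_integral_coleHopf {ε t M : ℝ} (hε : 0 < ε) (ht : 0 < t) {W : ℝ → ℝ}
    (hW_cont : Continuous W) (hW : ∀ y, |W y| ≤ M * |y|) (x : ℝ) :
    HasDerivAt (fun x => ∫ y, exp (-(x - y) ^ 2 / (4 * ε * t) - W y / (2 * ε)))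
      (-(1 / (2 * ε * t)) *
        ∫ y, (x - y) * exp (-(x - y) ^ 2 / (4 * ε * t) - W y / (2 * ε))) x := by
  have hweight : ∀ y, ‖exp (-W y / (2 * ε))‖ ≤ 1 * exp (M / (2 * ε) * |y|) := fun y => by
    rw [norm_of_nonneg (exp_pos _).le, one_mul, exp_le_exp, div_mul_eq_mul_div]
    gcongr
    exact (neg_le_abs _).trans (hW y)
  have hsplit : ∀ x' y, exp (-(1 / (4 * ε * t)) * (x' - y) ^ 2) * exp (-W y / (2 * ε)) =
      exp (-(x' - y) ^ 2 / (4 * ε * t) - W y / (2 * ε)) := fun x' y => by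
    rw [← exp_add]; ring_nf
  have hF : (fun x' => ∫ y, exp (-(1 / (4 * ε * t)) * (x' - y) ^ 2) • exp (-W y / (2 * ε))) =
      fun x' => ∫ y, exp (-(x' - y) ^ 2 / (4 * ε * t) - W y / (2 * ε)) :=
    funext fun x' => by simp only [smul_eq_mul, hsplit]
  have hF' : ∫ y, (-2 * (1 / (4 * ε * t)) * (x - y) * exp (-(1 / (4 * ε * t)) * (x - y) ^ 2)) •
        exp (-W y / (2 * ε)) =
      -(1 / (2 * ε * t)) * ∫ y, (x - y) * exp (-(x - y) ^ 2 / (4 * ε * t) - W y / (2 * ε)) := by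
    rw [← integral_const_mul]
    congr 1
    funext y
    rw [smul_eq_mul, ← hsplit]
    field_simp
    ring
  rw [← hF, ← hF']
  exact hasDerivAt_integral_exp_neg_mul_sq_sub_smul (by positivity)
    (by fun_prop : Continuous fun y => exp (-W y / (2 * ε))).aestronglyMeasurable hweight x

/-- Differentiation under the integral sign for the Cole–Hopf integral:
`∂φ/∂x (x,t) = -(1/(2εt)) ∫_ℝ (x-y) exp(-(x-y)²/(4εt) - W(y)/(2ε)) dy`,
and consequently the Hopf quotient equals `-2ε φ_x/φ`. -/
theorem coleHopf_deriv_and_hopf_quotient (ε : ℝ) (hε : 0 < ε) (u₀ : ℝ → ℝ)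
    (hmeas : Measurable u₀) (M : ℝ) (hbdd : ∀ z, |u₀ z| ≤ M)
    (W : ℝ → ℝ) (hW : ∀ y, W y = ∫ z in (0:ℝ)..y, u₀ z)
    (φ : ℝ → ℝ → ℝ)
    (hφ : ∀ (x t : ℝ), 0 < t → φ x t =
      ∫ y : ℝ, Real.exp (-(x - y) ^ 2 / (4 * ε * t) - W y / (2 * ε)))
    (x t : ℝ) (ht : 0 < t) :
    HasDerivAt (fun x' => φ x' t)
      (-(1 / (2 * ε * t)) *
        ∫ y : ℝ, (x - y) * Real.exp (-(x - y) ^ 2 / (4 * ε * t) - W y / (2 * ε))) x ∧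
    (∫ y : ℝ, (x - y) * Real.exp (-(x - y) ^ 2 / (4 * ε * t) - W y / (2 * ε))) /
        (t * ∫ y : ℝ, Real.exp (-(x - y) ^ 2 / (4 * ε * t) - W y / (2 * ε)))
      = -2 * ε * deriv (fun x' => φ x' t) x / φ x t := by
  have hW_cont : Continuous W :=
    funext hW ▸ continuous_primitive_of_norm_le hmeas.aestronglyMeasurable hbdd 0
  have hW_le : ∀ y, |W y| ≤ M * |y| := fun y => by
    simpa [hW y] using intervalIntegral.norm_integral_le_of_norm_le_const (a := 0) (b := y)
      (f := u₀) fun z _ => hbdd z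
  have hD : HasDerivAt (fun x' => φ x' t) _ x :=
    (hasDerivAt_integral_coleHopf hε ht hW_cont hW_le x).congr_of_eventuallyEq
      (.of_forall fun x' => hφ x' t ht)
  have hquot : ∀ A B : ℝ, A / (t * B) = -2 * ε * (-(1 / (2 * ε * t)) * A) / B := fun A B => by
    field_simp
  refine ⟨hD, ?_⟩
  rw [hD.deriv, hφ x t ht]
  exact hquot _ _
end

section
/- Let ε > 0 and let u₀ : ℝ → ℝ be continuous and bounded, and set W(y) := ∫₀^y u₀(z) dz. Define, for x ∈ ℝ and t > 0, u(x,t) := [∫_ℝ (x−y) exp( −(x−y)²/(4εt) − W(y)/(2ε) ) dy] / [ t ∫_ℝ exp( −(x−y)²/(4εt) − W(y)/(2ε) ) dy ]. Then u satisfies Burgers' equation ∂u/∂t + u ∂u/∂x = ε ∂²u/∂x² at every point of ℝ × (0,∞). -/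
/-!
Write `φₙ(x,t) = ∫ (x - y)ⁿ exp(-(x - y)²/(4εt) - W(y)/(2ε)) dy`. Since `|W y| ≤ M|y|`,
every integrand is dominated by a Gaussian uniformly for `(x,t)` near a point with `t > 0`,
so the `φₙ` can be differentiated under the integral sign, giving the recursions
`∂ₓφₙ = n φₙ₋₁ - φₙ₊₁/(2εt)` and `∂ₜφₙ = φₙ₊₂/(4εt²)`.
The Hopf solution is `u = φ₁/(tφ₀)` (that is, `u = -2ε ∂ₓ log φ₀`), and with these
recursions Burgers' equation for `u` becomes an algebraic identity between `φ₀, …, φ₃`.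
-/

open MeasureTheory Real Filter

theorem integrable_add_abs_pow_mul_exp (k : ℕ) (b : ℝ) {a c : ℝ} (ha : 0 ≤ a) (hc : 0 < c) :
    Integrable fun y : ℝ => (a + |y|) ^ k * exp (b * |y| - c * y ^ 2) := by
  refine Integrable.mono' ((integrable_exp_neg_mul_sq (half_pos hc)).const_mul
      (k.factorial * exp (a + (|b| + 1) ^ 2 / (2 * c))))
    (Continuous.aestronglyMeasurable (by fun_prop)) (.of_forall fun y => ?_)
  have hpow : (a + |y|) ^ k ≤ k.factorial * exp (a + |y|) := by
    have := pow_div_factorial_le_exp _ (add_nonneg ha (abs_nonneg y)) k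
    rwa [div_le_iff₀ (by positivity), mul_comm] at this
  have hexponent :
      a + |y| + (b * |y| - c * y ^ 2) ≤ a + (|b| + 1) ^ 2 / (2 * c) + -(c / 2) * y ^ 2 := by
    have hb : b * |y| ≤ |b| * |y| := mul_le_mul_of_nonneg_right (le_abs_self b) (abs_nonneg y)
    have hamgm : (|b| + 1) * |y| ≤ (|b| + 1) ^ 2 / (2 * c) + c / 2 * y ^ 2 := by
      have hsq : 0 ≤ ((|b| + 1) - c * |y|) ^ 2 / (2 * c) := by positivity
      have h : ((|b| + 1) - c * |y|) ^ 2 / (2 * c) =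
          (|b| + 1) ^ 2 / (2 * c) + c / 2 * y ^ 2 - (|b| + 1) * |y| := by
        field_simp; rw [← sq_abs y]; ring
      linarith
    linarith
  calc ‖(a + |y|) ^ k * exp (b * |y| - c * y ^ 2)‖
      = (a + |y|) ^ k * exp (b * |y| - c * y ^ 2) := by
        rw [norm_of_nonneg (by positivity)]
    _ ≤ k.factorial * exp (a + |y|) * exp (b * |y| - c * y ^ 2) := by gcongr
    _ ≤ k.factorial * exp (a + (|b| + 1) ^ 2 / (2 * c)) * exp (-(c / 2) * y ^ 2) := by
        rw [mul_assoc, mul_assoc, ← exp_add, ← exp_add]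
        gcongr

noncomputable def hopfKernel (ε : ℝ) (W : ℝ → ℝ) (x t y : ℝ) : ℝ :=
  exp (-(x - y) ^ 2 / (4 * ε * t) - W y / (2 * ε))

noncomputable def hopfMoment (ε : ℝ) (W : ℝ → ℝ) (n : ℕ) (x t : ℝ) : ℝ :=
  ∫ y, (x - y) ^ n * hopfKernel ε W x t y

/-- Majorant of the moment integrands, uniform over `|x| ≤ R` and `τ ≤ t ≤ T`. -/
noncomputable def hopfMajorant (ε M R τ T : ℝ) (k : ℕ) (y : ℝ) : ℝ :=
  exp (R ^ 2 / (4 * ε * τ)) *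
    ((R + |y|) ^ k * exp (M / (2 * ε) * |y| - 1 / (8 * ε * T) * y ^ 2))

theorem integrable_hopfMajorant (ε M : ℝ) {R T : ℝ} (τ : ℝ) (k : ℕ) (hε : 0 < ε)
    (hR : 0 ≤ R) (hT : 0 < T) : Integrable (hopfMajorant ε M R τ T k) :=
  (integrable_add_abs_pow_mul_exp k _ hR (by positivity)).const_mul _

section

variable {ε M : ℝ} {W : ℝ → ℝ}

theorem continuous_pow_mul_hopfKernel (hWc : Continuous W) (n : ℕ) (x t : ℝ) :
    Continuous fun y => (x - y) ^ n * hopfKernel ε W x t y := by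
  unfold hopfKernel; fun_prop

theorem hopfKernel_le (hε : 0 < ε) (hWM : ∀ y, |W y| ≤ M * |y|) {R τ T x t : ℝ}
    (hx : |x| ≤ R) (hτ : 0 < τ) (hτt : τ ≤ t) (htT : t ≤ T) (y : ℝ) :
    hopfKernel ε W x t y ≤
      exp (R ^ 2 / (4 * ε * τ)) * exp (M / (2 * ε) * |y| - 1 / (8 * ε * T) * y ^ 2) := by
  have ht : 0 < t := hτ.trans_le hτt
  rw [hopfKernel, ← exp_add, exp_le_exp]
  have hgauss : -(x - y) ^ 2 / (4 * ε * t) ≤ x ^ 2 / (4 * ε * t) - y ^ 2 / (8 * ε * t) := by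
    have h : -(x - y) ^ 2 ≤ x ^ 2 - y ^ 2 / 2 := by nlinarith [sq_nonneg (2 * x - y)]
    calc -(x - y) ^ 2 / (4 * ε * t) ≤ (x ^ 2 - y ^ 2 / 2) / (4 * ε * t) := by gcongr
      _ = x ^ 2 / (4 * ε * t) - y ^ 2 / (8 * ε * t) := by ring
  have hx2 : x ^ 2 / (4 * ε * t) ≤ R ^ 2 / (4 * ε * τ) := by
    have : x ^ 2 ≤ R ^ 2 := sq_le_sq' (abs_le.mp hx).1 (abs_le.mp hx).2
    gcongr
  have hy2 : 1 / (8 * ε * T) * y ^ 2 ≤ y ^ 2 / (8 * ε * t) := by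
    rw [one_div_mul_eq_div]; gcongr
  have hWy : -(W y / (2 * ε)) ≤ M / (2 * ε) * |y| := by
    rw [div_mul_eq_mul_div, ← neg_div]
    gcongr
    linarith [neg_abs_le (W y), hWM y]
  linarith

theorem abs_pow_mul_hopfKernel_le (hε : 0 < ε) (hWM : ∀ y, |W y| ≤ M * |y|) {R τ T x t : ℝ}
    (hx : |x| ≤ R) (hτ : 0 < τ) (hτt : τ ≤ t) (htT : t ≤ T) (k : ℕ) (y : ℝ) :
    |(x - y) ^ k * hopfKernel ε W x t y| ≤ hopfMajorant ε M R τ T k y := by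
  have hxy : |x - y| ≤ R + |y| := (abs_sub x y).trans (by linarith)
  rw [abs_mul, abs_pow, abs_of_pos (show 0 < hopfKernel ε W x t y from exp_pos _), hopfMajorant,
    mul_left_comm]
  exact mul_le_mul (pow_le_pow_left₀ (abs_nonneg _) hxy k)
    (hopfKernel_le hε hWM hx hτ hτt htT y) (exp_pos _).le
    (pow_nonneg ((abs_nonneg _).trans hxy) k)

theorem integrable_pow_mul_hopfKernel (hε : 0 < ε) (hWc : Continuous W)
    (hWM : ∀ y, |W y| ≤ M * |y|) (n : ℕ) (x : ℝ) {t : ℝ} (ht : 0 < t) :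
    Integrable fun y => (x - y) ^ n * hopfKernel ε W x t y :=
  (integrable_hopfMajorant ε M t n hε (abs_nonneg x) ht).mono'
    (continuous_pow_mul_hopfKernel hWc n x t).aestronglyMeasurable
    (.of_forall (abs_pow_mul_hopfKernel_le hε hWM le_rfl ht le_rfl le_rfl n))

theorem hasDerivAt_pow_mul_hopfKernel_x (n : ℕ) (x t y : ℝ) :
    HasDerivAt (fun x' => (x' - y) ^ n * hopfKernel ε W x' t y)
      (n * ((x - y) ^ (n - 1) * hopfKernel ε W x t y) -
        (x - y) ^ (n + 1) * hopfKernel ε W x t y / (2 * ε * t)) x := by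
  have hsub : HasDerivAt (fun x' => x' - y) 1 x := (hasDerivAt_id x).sub_const y
  have hpow : HasDerivAt (fun x' => (x' - y) ^ n) _ x := hsub.fun_pow n
  have hkernel : HasDerivAt (fun x' => exp (-(x' - y) ^ 2 / (4 * ε * t) - W y / (2 * ε))) _ x :=
    (((hsub.fun_pow 2).fun_neg.div_const (4 * ε * t)).sub_const _).exp
  refine (hpow.mul hkernel).congr_deriv ?_
  simp only [hopfKernel]
  ring

theorem hasDerivAt_pow_mul_hopfKernel_t (hε : ε ≠ 0) (n : ℕ) (x y : ℝ) {t : ℝ}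
    (ht : t ≠ 0) :
    HasDerivAt (fun t' => (x - y) ^ n * hopfKernel ε W x t' y)
      ((x - y) ^ (n + 2) * hopfKernel ε W x t y / (4 * ε * t ^ 2)) t := by
  have hquot : HasDerivAt (fun t' => -(x - y) ^ 2 / (4 * ε * t')) _ t :=
    (hasDerivAt_const t _).div ((hasDerivAt_id' t).const_mul (4 * ε)) (by simp [hε, ht])
  have hkernel : HasDerivAt (fun t' => hopfKernel ε W x t' y) _ t := (hquot.sub_const _).exp
  refine (hkernel.const_mul _).congr_deriv ?_
  simp only [hopfKernel]
  field_simp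
  ring

theorem hasDerivAt_hopfMoment_x (hε : 0 < ε) (hWc : Continuous W) (hWM : ∀ y, |W y| ≤ M * |y|)
    (n : ℕ) (x : ℝ) {t : ℝ} (ht : 0 < t) :
    HasDerivAt (fun x' => hopfMoment ε W n x' t)
      (n * hopfMoment ε W (n - 1) x t - hopfMoment ε W (n + 1) x t / (2 * ε * t)) x := by
  have hint k := integrable_pow_mul_hopfKernel hε hWc hWM k x ht
  have hmaj k := integrable_hopfMajorant ε M t k hε (by positivity : 0 ≤ |x| + 1) ht
  have h := (hasDerivAt_integral_of_dominated_loc_of_deriv_le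
    (F := fun x' y => (x' - y) ^ n * hopfKernel ε W x' t y)
    (bound := fun y => n * hopfMajorant ε M (|x| + 1) t t (n - 1) y +
      hopfMajorant ε M (|x| + 1) t t (n + 1) y / (2 * ε * t))
    (Icc_mem_nhds (sub_one_lt x) (lt_add_one x))
    (.of_forall fun x' => (continuous_pow_mul_hopfKernel hWc n x' t).aestronglyMeasurable)
    (hint n) (((hint (n - 1)).const_mul n).sub ((hint (n + 1)).div_const _)).aestronglyMeasurable
    (.of_forall fun y x' hx' => ?_)
    (((hmaj (n - 1)).const_mul n).add ((hmaj (n + 1)).div_const _))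
    (.of_forall fun y x' _ => hasDerivAt_pow_mul_hopfKernel_x n x' t y)).2
  · rwa [integral_sub ((hint _).const_mul _) ((hint _).div_const _), integral_const_mul,
      integral_div] at h
  · have hx'R : |x'| ≤ |x| + 1 :=
      abs_le.mpr ⟨by linarith [neg_abs_le x, hx'.1], by linarith [le_abs_self x, hx'.2]⟩
    have hbound k := abs_pow_mul_hopfKernel_le hε hWM hx'R ht le_rfl le_rfl k y
    calc _ ≤ n * |(x' - y) ^ (n - 1) * hopfKernel ε W x' t y| +
          |(x' - y) ^ (n + 1) * hopfKernel ε W x' t y| / (2 * ε * t) := by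
          rw [Real.norm_eq_abs]
          refine (abs_sub _ _).trans_eq ?_
          rw [abs_mul, abs_div, Nat.abs_cast, abs_of_pos (by positivity : 0 < 2 * ε * t)]
      _ ≤ _ := by gcongr <;> apply hbound

theorem hasDerivAt_hopfMoment_t (hε : 0 < ε) (hWc : Continuous W) (hWM : ∀ y, |W y| ≤ M * |y|)
    (n : ℕ) (x : ℝ) {t : ℝ} (ht : 0 < t) :
    HasDerivAt (fun t' => hopfMoment ε W n x t')
      (hopfMoment ε W (n + 2) x t / (4 * ε * t ^ 2)) t := by
  have hint k := integrable_pow_mul_hopfKernel hε hWc hWM k x ht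
  have h := (hasDerivAt_integral_of_dominated_loc_of_deriv_le
    (F := fun t' y => (x - y) ^ n * hopfKernel ε W x t' y)
    (bound := fun y => hopfMajorant ε M |x| (t / 2) (2 * t) (n + 2) y / (ε * t ^ 2))
    (Icc_mem_nhds (half_lt_self ht) (by linarith : t < 2 * t))
    (.of_forall fun t' => (continuous_pow_mul_hopfKernel hWc n x t').aestronglyMeasurable)
    (hint n) ((hint (n + 2)).div_const _).aestronglyMeasurable
    (.of_forall fun y t' ht' => ?_)
    ((integrable_hopfMajorant ε M _ _ hε (abs_nonneg x) (by positivity)).div_const _)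
    (.of_forall fun y t' ht' =>
      hasDerivAt_pow_mul_hopfKernel_t hε.ne' n x y (by linarith [ht'.1]))).2
  · rwa [integral_div] at h
  · have ht'pos : 0 < t' := by linarith [ht'.1]
    have hbound :=
      abs_pow_mul_hopfKernel_le hε hWM (le_refl |x|) (half_pos ht) ht'.1 ht'.2 (n + 2) y
    rw [Real.norm_eq_abs, abs_div, abs_of_pos (by positivity : 0 < 4 * ε * t' ^ 2)]
    refine div_le_div₀ ((abs_nonneg _).trans hbound) hbound (by positivity) ?_
    have h2t' : 0 ≤ 2 * t' - t := by linarith [ht'.1]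
    nlinarith [mul_nonneg hε.le (mul_nonneg h2t' (by positivity : 0 ≤ 2 * t' + t))]

theorem hopfMoment_zero_pos (hε : 0 < ε) (hWc : Continuous W) (hWM : ∀ y, |W y| ≤ M * |y|)
    (x : ℝ) {t : ℝ} (ht : 0 < t) : 0 < hopfMoment ε W 0 x t := by
  have h := integrable_pow_mul_hopfKernel hε hWc hWM 0 x ht
  simp only [pow_zero, one_mul, hopfKernel] at h
  simpa [hopfMoment, hopfKernel] using integral_exp_pos h

end

theorem burgers_of_moment_recursion {ε t : ℝ} {φ : ℕ → ℝ → ℝ → ℝ} (hε : ε ≠ 0)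
    (ht : t ≠ 0) (x : ℝ) (hφ₀ : ∀ y, φ 0 y t ≠ 0)
    (hφx : ∀ n y, HasDerivAt (φ n · t) (n * φ (n - 1) y t - φ (n + 1) y t / (2 * ε * t)) y)
    (hφt : ∀ n, HasDerivAt (φ n x ·) (φ (n + 2) x t / (4 * ε * t ^ 2)) t) :
    deriv (fun τ => φ 1 x τ / (τ * φ 0 x τ)) t +
        φ 1 x t / (t * φ 0 x t) * deriv (fun y => φ 1 y t / (t * φ 0 y t)) x
      = ε * deriv (deriv fun y => φ 1 y t / (t * φ 0 y t)) x := by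
  have hx₀ y : HasDerivAt (φ 0 · t) (-(φ 1 y t / (2 * ε * t))) y :=
    (hφx 0 y).congr_deriv (by simp)
  have hx₁ y : HasDerivAt (φ 1 · t) (φ 0 y t - φ 2 y t / (2 * ε * t)) y :=
    (hφx 1 y).congr_deriv (by simp)
  have hx₂ y : HasDerivAt (φ 2 · t) (2 * φ 1 y t - φ 3 y t / (2 * ε * t)) y :=
    (hφx 2 y).congr_deriv (by norm_num)
  have hut : HasDerivAt (fun τ => φ 1 x τ / (τ * φ 0 x τ)) _ t :=
    (hφt 1).div ((hasDerivAt_id' t).fun_mul (hφt 0)) (mul_ne_zero ht (hφ₀ x))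
  have hux : deriv (fun y => φ 1 y t / (t * φ 0 y t)) = fun y =>
      (φ 0 y t ^ 2 - (φ 0 y t * φ 2 y t - φ 1 y t ^ 2) / (2 * ε * t)) /
        (t * φ 0 y t ^ 2) := by
    refine funext fun y =>
      (((hx₁ y).div ((hx₀ y).const_mul t) (mul_ne_zero ht (hφ₀ y))).congr_deriv ?_).deriv
    field_simp [hφ₀ y]
    ring
  have huxx : HasDerivAt (fun y =>
      (φ 0 y t ^ 2 - (φ 0 y t * φ 2 y t - φ 1 y t ^ 2) / (2 * ε * t)) /
        (t * φ 0 y t ^ 2)) _ x :=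
    (((hx₀ x).fun_pow 2).fun_sub
      ((((hx₀ x).fun_mul (hx₂ x)).fun_sub ((hx₁ x).fun_pow 2)).div_const _)).div
      (((hx₀ x).fun_pow 2).const_mul t) (mul_ne_zero ht (pow_ne_zero 2 (hφ₀ x)))
  rw [hut.deriv, hux, huxx.deriv]
  field_simp [hφ₀ x]
  ring

/-- The Hopf exact-solution formula
`u(x,t) = [∫_ℝ (x-y) exp(-(x-y)²/(4εt) - W(y)/(2ε)) dy] /
          [t ∫_ℝ exp(-(x-y)²/(4εt) - W(y)/(2ε)) dy]`
satisfies Burgers' equation `u_t + u u_x = ε u_xx` on `ℝ × (0,∞)`. -/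
theorem hopf_formula_solves_burgers (ε : ℝ) (hε : 0 < ε) (u₀ : ℝ → ℝ)
    (hcont : Continuous u₀) (M : ℝ) (hbdd : ∀ z, |u₀ z| ≤ M)
    (W : ℝ → ℝ) (hW : ∀ y, W y = ∫ z in (0:ℝ)..y, u₀ z)
    (u : ℝ → ℝ → ℝ)
    (hu : ∀ (x t : ℝ), 0 < t → u x t =
      (∫ y : ℝ, (x - y) * Real.exp (-(x - y) ^ 2 / (4 * ε * t) - W y / (2 * ε))) /
        (t * ∫ y : ℝ, Real.exp (-(x - y) ^ 2 / (4 * ε * t) - W y / (2 * ε)))) :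
    ∀ x t : ℝ, 0 < t →
      deriv (fun τ => u x τ) t + u x t * deriv (fun y => u y t) x
        = ε * deriv (deriv fun y => u y t) x := by
  intro x t ht
  have hWc : Continuous W := by
    simpa only [← funext hW] using
      intervalIntegral.continuous_primitive (μ := volume) hcont.intervalIntegrable 0
  have hWM y : |W y| ≤ M * |y| := by
    simpa [hW] using intervalIntegral.norm_integral_le_of_norm_le_const (a := 0) (b := y)
      fun z _ => (Real.norm_eq_abs (u₀ z)).trans_le (hbdd z)
  have hu_moment x t (ht : 0 < t) :
      u x t = hopfMoment ε W 1 x t / (t * hopfMoment ε W 0 x t) := by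
    simp [hu x t ht, hopfMoment, hopfKernel]
  have hu_t : deriv (fun τ => u x τ) t =
      deriv (fun τ => hopfMoment ε W 1 x τ / (τ * hopfMoment ε W 0 x τ)) t :=
    Filter.EventuallyEq.deriv_eq ((eventually_gt_nhds ht).mono fun τ => hu_moment x τ)
  rw [hu_t, funext fun y => hu_moment y t ht, hu_moment x t ht]
  exact burgers_of_moment_recursion hε.ne' ht.ne' x
    (fun y => (hopfMoment_zero_pos hε hWc hWM y ht).ne')
    (fun n y => hasDerivAt_hopfMoment_x hε hWc hWM n y ht)
    (fun n => hasDerivAt_hopfMoment_t hε hWc hWM n x ht)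
end

section
/- Let ε > 0 and let u₀ : ℝ → ℝ be measurable and bounded, set W(y) := ∫₀^y u₀(z) dz, and define for x ∈ ℝ and t > 0 the Hopf quotient u(x,t) := [∫_ℝ (x−y) exp( −(x−y)²/(4εt) − W(y)/(2ε) ) dy] / [ t ∫_ℝ exp( −(x−y)²/(4εt) − W(y)/(2ε) ) dy ]. If x₀ ∈ ℝ is a point at which u₀ is continuous, then u(x₀, t) → u₀(x₀) as t → 0⁺. -/
/-!
Substituting `y = x₀ - s w` with `s = √t` turns the Hopf quotient at `x₀` into
`(∫ w e^{-w²/4ε - φ(s w)} dw / s) / ∫ e^{-w²/4ε - φ(s w)} dw`, where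
`φ z = (W (x₀ - z) - W x₀) / 2ε`. Since `W` is Lipschitz, `|φ z| ≤ K |z|`, and dominated convergence
applies: the denominator tends to the Gaussian integral `∫ e^{-w²/4ε}`, while (the Gaussian having
mean zero) the numerator over `s` tends to `-φ'(0) ∫ w² e^{-w²/4ε} = (u₀ x₀ / 2ε) · 2ε ∫ e^{-w²/4ε}`.
-/

open MeasureTheory Filter Topology Real
open scoped NNReal

theorem abs_exp_sub_one_le_abs_mul_exp_abs (x : ℝ) : |exp x - 1| ≤ |x| * exp |x| := by
  rcases le_or_gt x 0 with hx | hx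
  · rw [abs_of_nonpos (by simpa using hx), abs_of_nonpos hx]
    nlinarith [add_one_le_exp x, one_le_exp (neg_nonneg.mpr hx)]
  · rw [abs_of_pos (by simpa using hx), abs_of_pos hx]
    nlinarith [add_one_le_exp (-x), exp_pos x, exp_neg x, mul_inv_cancel₀ (exp_pos x).ne']

section Gaussian

variable {b : ℝ}

theorem integrable_abs_pow_mul_exp_neg_mul_sq_add_mul_abs (hb : 0 < b) (c : ℝ) (n : ℕ) :
    Integrable fun w : ℝ => |w| ^ n * exp (-b * w ^ 2 + c * |w|) := by
  have hdom : Integrable fun w : ℝ => |w| ^ n * exp (-(b / 2) * w ^ 2) := by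
    simpa [abs_mul, abs_pow, abs_of_pos (exp_pos _)] using
      (integrable_rpow_mul_exp_neg_mul_sq (half_pos hb) (s := n)
        (neg_one_lt_zero.trans_le n.cast_nonneg)).abs
  refine (hdom.const_mul (exp (c ^ 2 / (2 * b)))).mono' (by fun_prop) (ae_of_all _ fun w => ?_)
  have hsq : -b * w ^ 2 + c * |w| ≤ c ^ 2 / (2 * b) + -(b / 2) * w ^ 2 := by
    have : c ^ 2 / (2 * b) + -(b / 2) * w ^ 2 - (-b * w ^ 2 + c * |w|)
        = (b * |w| - c) ^ 2 / (2 * b) := by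
      field_simp
      rw [← sq_abs w]
      ring
    nlinarith [this, div_nonneg (sq_nonneg (b * |w| - c)) (by positivity : (0 : ℝ) ≤ 2 * b)]
  rw [norm_of_nonneg (by positivity), mul_left_comm, ← exp_add]
  gcongr

theorem integral_mul_exp_neg_mul_sq_eq_zero : ∫ x : ℝ, x * exp (-b * x ^ 2) = 0 := by
  have h := integral_neg_eq_self (fun x : ℝ => x * exp (-b * x ^ 2)) volume
  simp only [neg_sq, neg_mul, integral_neg] at h ⊢
  linarith

theorem integral_sq_mul_exp_neg_mul_sq (hb : 0 < b) :
    ∫ x : ℝ, x ^ 2 * exp (-b * x ^ 2) = (2 * b)⁻¹ * ∫ x : ℝ, exp (-b * x ^ 2) := by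
  have hv : ∀ x : ℝ, HasDerivAt (fun x => -(2 * b)⁻¹ * exp (-b * x ^ 2))
      (x * exp (-b * x ^ 2)) x := fun x => by
    refine (((hasDerivAt_pow 2 x).const_mul (-b)).exp.const_mul (-(2 * b)⁻¹)).congr_deriv ?_
    field_simp
    ring
  have huv' : Integrable fun x : ℝ => x * (x * exp (-b * x ^ 2)) := by
    simpa [sq, mul_assoc] using integrable_rpow_mul_exp_neg_mul_sq hb (s := 2) (by norm_num)
  have hu'v : Integrable fun x : ℝ => 1 * (-(2 * b)⁻¹ * exp (-b * x ^ 2)) := by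
    simpa using (integrable_exp_neg_mul_sq hb).const_mul (-(2 * b)⁻¹)
  have huv : Integrable fun x : ℝ => x * (-(2 * b)⁻¹ * exp (-b * x ^ 2)) := by
    simpa [mul_left_comm] using (integrable_mul_exp_neg_mul_sq hb).const_mul (-(2 * b)⁻¹)
  have hibp := integral_mul_deriv_eq_deriv_mul_of_integrable (fun x _ => hasDerivAt_id' x)
    (fun x _ => hv x) huv' hu'v huv
  simp only [one_mul, integral_const_mul] at hibp
  simpa [sq, mul_assoc] using hibp

end Gaussian

section PerturbedGaussian

variable {b K d : ℝ} {φ : ℝ → ℝ}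

theorem exp_neg_mul_sq_sub_le (hφ : ∀ z, |φ z| ≤ K * |z|) (s w : ℝ) :
    exp (-b * w ^ 2 - φ (s * w)) ≤ exp (-b * w ^ 2 + K * |s| * |w|) := by
  rw [sub_eq_add_neg, mul_assoc, ← abs_mul]
  gcongr
  exact (neg_le_abs _).trans (hφ _)

theorem abs_exp_neg_comp_mul_sub_one_le (hφ : ∀ z, |φ z| ≤ K * |z|) {s : ℝ} (hs : |s| ≤ 1)
    (w : ℝ) : |exp (-φ (s * w)) - 1| ≤ K * |s| * |w| * exp (K * |w|) := by
  have hK : 0 ≤ K := by simpa using (abs_nonneg _).trans (hφ 1)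
  have h : |φ (s * w)| ≤ K * |s| * |w| := by
    rw [mul_assoc, ← abs_mul]
    exact hφ _
  have h' : K * |s| * |w| ≤ K * |w| := by
    rw [mul_right_comm]
    exact mul_le_of_le_one_right (by positivity) hs
  calc |exp (-φ (s * w)) - 1| ≤ |φ (s * w)| * exp |φ (s * w)| := by
        simpa using abs_exp_sub_one_le_abs_mul_exp_abs (-φ (s * w))
    _ ≤ K * |s| * |w| * exp (K * |w|) := by gcongr; exact h.trans h'

theorem tendsto_integral_exp_neg_mul_sq_sub_comp_mul (hb : 0 < b) (hφc : Continuous φ)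
    (hφ : ∀ z, |φ z| ≤ K * |z|) :
    Tendsto (fun s => ∫ w, exp (-b * w ^ 2 - φ (s * w))) (𝓝 0)
      (𝓝 (∫ w, exp (-b * w ^ 2))) := by
  have hK : 0 ≤ K := by simpa using (abs_nonneg _).trans (hφ 1)
  have hφ0 : φ 0 = 0 := abs_nonpos_iff.mp (by simpa using hφ 0)
  refine tendsto_integral_filter_of_dominated_convergence (fun w => exp (-b * w ^ 2 + K * |w|))
    (Eventually.of_forall fun s => by fun_prop) ?_
    (by simpa using integrable_abs_pow_mul_exp_neg_mul_sq_add_mul_abs hb K 0)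
    (ae_of_all _ fun w => ?_)
  · filter_upwards [Metric.closedBall_mem_nhds (0 : ℝ) one_pos] with s hs
    refine ae_of_all _ fun w => ?_
    rw [norm_of_nonneg (exp_pos _).le]
    refine (exp_neg_mul_sq_sub_le hφ s w).trans ?_
    have hs' : |s| ≤ 1 := by simpa using hs
    gcongr
    exact mul_le_of_le_one_right hK hs'
  · have : Continuous fun s => exp (-b * w ^ 2 - φ (s * w)) := by fun_prop
    simpa [hφ0] using this.tendsto 0

theorem integral_mul_exp_neg_mul_sq_sub_comp_mul_div (hb : 0 < b) (hφc : Continuous φ)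
    (hφ : ∀ z, |φ z| ≤ K * |z|) (s : ℝ) :
    (∫ w, w * exp (-b * w ^ 2 - φ (s * w))) / s
      = ∫ w, w * exp (-b * w ^ 2) * ((exp (-φ (s * w)) - 1) / s) := by
  have hint : Integrable fun w => w * exp (-b * w ^ 2 - φ (s * w)) := by
    refine (integrable_abs_pow_mul_exp_neg_mul_sq_add_mul_abs hb (K * |s|) 1).mono' (by fun_prop)
      (ae_of_all _ fun w => ?_)
    rw [norm_mul, norm_of_nonneg (exp_pos _).le, pow_one, Real.norm_eq_abs]
    exact mul_le_mul_of_nonneg_left (exp_neg_mul_sq_sub_le hφ s w) (abs_nonneg w)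
  calc (∫ w, w * exp (-b * w ^ 2 - φ (s * w))) / s
      = ((∫ w, w * exp (-b * w ^ 2 - φ (s * w))) - ∫ w, w * exp (-b * w ^ 2)) / s := by
        rw [integral_mul_exp_neg_mul_sq_eq_zero, sub_zero]
    _ = ∫ w, (w * exp (-b * w ^ 2 - φ (s * w)) - w * exp (-b * w ^ 2)) / s := by
        rw [integral_div, integral_sub hint (integrable_mul_exp_neg_mul_sq hb)]
    _ = ∫ w, w * exp (-b * w ^ 2) * ((exp (-φ (s * w)) - 1) / s) := by
        congr 1
        funext w
        rw [sub_eq_add_neg (-b * w ^ 2), exp_add]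
        ring

theorem tendsto_integral_mul_exp_neg_mul_sq_sub_comp_mul_div (hb : 0 < b) (hφc : Continuous φ)
    (hφ : ∀ z, |φ z| ≤ K * |z|) (hd : HasDerivAt φ d 0) :
    Tendsto (fun s => (∫ w, w * exp (-b * w ^ 2 - φ (s * w))) / s) (𝓝[≠] 0)
      (𝓝 (-d * ∫ w, w ^ 2 * exp (-b * w ^ 2))) := by
  have hφ0 : φ 0 = 0 := abs_nonpos_iff.mp (by simpa using hφ 0)
  have hlim : -d * ∫ w, w ^ 2 * exp (-b * w ^ 2) = ∫ w, w * exp (-b * w ^ 2) * -(d * w) := by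
    rw [← integral_const_mul]
    congr 1
    funext w
    ring
  simp_rw [integral_mul_exp_neg_mul_sq_sub_comp_mul_div hb hφc hφ, hlim]
  refine tendsto_integral_filter_of_dominated_convergence
    (fun w => K * (|w| ^ 2 * exp (-b * w ^ 2 + K * |w|))) (Eventually.of_forall fun s => by fun_prop)
    ?_ ((integrable_abs_pow_mul_exp_neg_mul_sq_add_mul_abs hb K 2).const_mul K)
    (ae_of_all _ fun w => ?_)
  · filter_upwards [self_mem_nhdsWithin,
      nhdsWithin_le_nhds (Metric.closedBall_mem_nhds (0 : ℝ) one_pos)] with s (hs0 : s ≠ 0) hs1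
    refine ae_of_all _ fun w => ?_
    have hs : |s| ≤ 1 := by simpa using hs1
    rw [norm_mul, norm_mul, norm_div, norm_of_nonneg (exp_pos _).le, Real.norm_eq_abs,
      Real.norm_eq_abs, Real.norm_eq_abs]
    calc |w| * exp (-b * w ^ 2) * (|exp (-φ (s * w)) - 1| / |s|)
        ≤ |w| * exp (-b * w ^ 2) * (K * |s| * |w| * exp (K * |w|) / |s|) := by
          gcongr
          exact abs_exp_neg_comp_mul_sub_one_le hφ hs w
      _ = K * (|w| ^ 2 * exp (-b * w ^ 2 + K * |w|)) := by
          rw [exp_add]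
          field_simp
  · have hderiv : HasDerivAt (fun s => exp (-φ (s * w))) (exp (-φ (0 * w)) * -(d * w)) 0 :=
      (hd.comp_of_eq 0 (hasDerivAt_mul_const w) (zero_mul w).symm).neg.exp
    convert hderiv.tendsto_slope_zero.const_mul (w * exp (-b * w ^ 2)) using 2 with s
    · simp only [zero_add, zero_mul, hφ0, neg_zero, exp_zero, smul_eq_mul]
      ring
    · simp [hφ0]

theorem tendsto_integral_mul_exp_neg_mul_sq_sub_comp_mul_div_integral (hb : 0 < b)
    (hφc : Continuous φ) (hφ : ∀ z, |φ z| ≤ K * |z|) (hd : HasDerivAt φ d 0) :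
    Tendsto (fun s => (∫ w, w * exp (-b * w ^ 2 - φ (s * w))) / s /
      ∫ w, exp (-b * w ^ 2 - φ (s * w))) (𝓝[≠] 0) (𝓝 (-d / (2 * b))) := by
  have hI : 0 < ∫ w, exp (-b * w ^ 2) := by
    rw [integral_gaussian]
    positivity
  have h := (tendsto_integral_mul_exp_neg_mul_sq_sub_comp_mul_div hb hφc hφ hd).div
    ((tendsto_integral_exp_neg_mul_sq_sub_comp_mul hb hφc hφ).mono_left nhdsWithin_le_nhds) hI.ne'
  rwa [integral_sq_mul_exp_neg_mul_sq hb, ← mul_assoc, mul_div_assoc, div_self hI.ne', mul_one,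
    ← div_eq_mul_inv] at h

end PerturbedGaussian

noncomputable def hopfQuotient (ε : ℝ) (W : ℝ → ℝ) (x t : ℝ) : ℝ :=
  (∫ y, (x - y) * exp (-(x - y) ^ 2 / (4 * ε * t) - W y / (2 * ε))) /
    (t * ∫ y, exp (-(x - y) ^ 2 / (4 * ε * t) - W y / (2 * ε)))

theorem integral_eq_mul_integral_comp_sub_mul (f : ℝ → ℝ) (x₀ : ℝ) {s : ℝ} (hs : 0 < s) :
    ∫ y, f y = s * ∫ w, f (x₀ - s * w) := by
  rw [Measure.integral_comp_mul_left (fun z => f (x₀ - z)), integral_sub_left_eq_self,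
    abs_of_pos (inv_pos.mpr hs), smul_eq_mul, mul_inv_cancel_left₀ hs.ne']

theorem hopfQuotient_sq_eq (ε : ℝ) (W : ℝ → ℝ) (x₀ : ℝ) {s : ℝ} (hs : 0 < s) :
    hopfQuotient ε W x₀ (s ^ 2) =
      (∫ w, w * exp (-(4 * ε)⁻¹ * w ^ 2 - (W (x₀ - s * w) - W x₀) / (2 * ε))) / s /
        ∫ w, exp (-(4 * ε)⁻¹ * w ^ 2 - (W (x₀ - s * w) - W x₀) / (2 * ε)) := by
  have hexp : ∀ w, -(s * w) ^ 2 / (4 * ε * s ^ 2) - W (x₀ - s * w) / (2 * ε)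
      = -W x₀ / (2 * ε) + (-(4 * ε)⁻¹ * w ^ 2 - (W (x₀ - s * w) - W x₀) / (2 * ε)) := fun w => by
    have hsq : (s * w) ^ 2 / (4 * ε * s ^ 2) = w ^ 2 / (4 * ε) := by
      rw [mul_pow, mul_comm (4 * ε), ← div_div, mul_div_cancel_left₀ _ (by positivity)]
    rw [neg_div, hsq]
    ring
  rw [hopfQuotient, integral_eq_mul_integral_comp_sub_mul _ x₀ hs,
    integral_eq_mul_integral_comp_sub_mul (fun y => exp _) x₀ hs]
  simp only [sub_sub_cancel, hexp]
  simp only [exp_add, mul_assoc, mul_left_comm _ (exp (-W x₀ / (2 * ε))), integral_const_mul]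
  have : exp (-W x₀ / (2 * ε)) ≠ 0 := (exp_pos _).ne'
  field_simp

theorem tendsto_hopfQuotient {ε : ℝ} (hε : 0 < ε) {W : ℝ → ℝ} {L : ℝ≥0} (hW : LipschitzWith L W)
    {x₀ a : ℝ} (hWa : HasDerivAt W a x₀) :
    Tendsto (hopfQuotient ε W x₀) (𝓝[>] 0) (𝓝 a) := by
  set φ : ℝ → ℝ := fun z => (W (x₀ - z) - W x₀) / (2 * ε)
  have hφc : Continuous φ := by
    have := hW.continuous
    fun_prop
  have hφ : ∀ z, |φ z| ≤ L / (2 * ε) * |z| := fun z => by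
    rw [abs_div, abs_of_pos (by positivity : 0 < 2 * ε), div_mul_eq_mul_div]
    gcongr
    simpa [← Real.dist_eq] using hW.dist_le_mul (x₀ - z) x₀
  have hd : HasDerivAt φ (-a / (2 * ε)) 0 := by
    have := ((hWa.comp_of_eq 0 ((hasDerivAt_id' 0).const_sub x₀) (sub_zero x₀).symm).sub_const
      (W x₀)).div_const (2 * ε)
    simpa [neg_div] using this
  have hlim := tendsto_integral_mul_exp_neg_mul_sq_sub_comp_mul_div_integral
    (b := (4 * ε)⁻¹) (by positivity) hφc hφ hd
  rw [show -(-a / (2 * ε)) / (2 * (4 * ε)⁻¹) = a by field_simp; ring] at hlim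
  have hsqrt : Tendsto sqrt (𝓝[>] 0) (𝓝[>] 0) :=
    tendsto_nhdsWithin_of_tendsto_nhds_of_eventually_within _
      (by simpa using (continuous_sqrt.tendsto 0).mono_left nhdsWithin_le_nhds)
      (eventually_nhdsWithin_of_forall fun t ht => sqrt_pos.mpr ht)
  refine ((hlim.mono_left (nhdsGT_le_nhdsNE 0)).comp hsqrt).congr' ?_
  filter_upwards [self_mem_nhdsWithin] with t (ht : 0 < t)
  rw [Function.comp_apply, ← hopfQuotient_sq_eq ε W x₀ (sqrt_pos.mpr ht), sq_sqrt ht.le]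

theorem lipschitzWith_intervalIntegral {f : ℝ → ℝ} {C : ℝ≥0} (hf : ∀ x, ‖f x‖ ≤ C)
    (hint : ∀ p q, IntervalIntegrable f volume p q) (a : ℝ) :
    LipschitzWith C fun x => ∫ t in a..x, f t :=
  LipschitzWith.of_dist_le_mul fun p q => by
    rw [dist_eq_norm, intervalIntegral.integral_interval_sub_left (hint a p) (hint a q),
      Real.dist_eq]
    exact intervalIntegral.norm_integral_le_of_norm_le_const fun x _ => hf x

/-- The Hopf exact-solution formula attains the initial condition:
at every continuity point `x₀` of the bounded measurable initial datum `u₀`,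
`u(x₀, t) → u₀(x₀)` as `t → 0⁺`. -/
theorem hopf_formula_initial_condition (ε : ℝ) (hε : 0 < ε) (u₀ : ℝ → ℝ)
    (hmeas : Measurable u₀) (M : ℝ) (hbdd : ∀ z, |u₀ z| ≤ M)
    (W : ℝ → ℝ) (hW : ∀ y, W y = ∫ z in (0:ℝ)..y, u₀ z)
    (u : ℝ → ℝ → ℝ)
    (hu : ∀ (x t : ℝ), 0 < t → u x t =
      (∫ y : ℝ, (x - y) * Real.exp (-(x - y) ^ 2 / (4 * ε * t) - W y / (2 * ε))) /
        (t * ∫ y : ℝ, Real.exp (-(x - y) ^ 2 / (4 * ε * t) - W y / (2 * ε))))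
    (x₀ : ℝ) (hx₀ : ContinuousAt u₀ x₀) :
    Tendsto (fun t => u x₀ t) (nhdsWithin 0 (Set.Ioi 0)) (nhds (u₀ x₀)) := by
  have hbdd' : ∀ z, ‖u₀ z‖ ≤ M.toNNReal := fun z => (hbdd z).trans (le_coe_toNNReal M)
  have hint : ∀ p q, IntervalIntegrable u₀ volume p q := fun p q =>
    intervalIntegrable_const.mono_fun' hmeas.aestronglyMeasurable (ae_of_all _ hbdd')
  obtain rfl : W = fun x => ∫ z in (0:ℝ)..x, u₀ z := funext hW
  have hWa := intervalIntegral.integral_hasDerivAt_right (hint 0 x₀)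
    hmeas.stronglyMeasurable.stronglyMeasurableAtFilter hx₀
  refine (tendsto_hopfQuotient hε (lipschitzWith_intervalIntegral hbdd' hint 0) hWa).congr' ?_
  filter_upwards [self_mem_nhdsWithin] with t ht
  exact (hu x₀ t ht).symm
end
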